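/- arXiv:0909.2203 — 8 statements merged into one kernel-verified Lean document; each statement's English description precedes it below -/
import Mathlib

section
/- A set function μ: 𝒜 → [0,∞) on a σ-algebra 𝒜 is grade-2 additive if and only if for all A, B ∈ 𝒜 it satisfies μ(A ∪ B) = μ(A) + μ(B) − μ(A ∩ B) + μ(A Δ B) − μ(A ∩ Bᶜ) − μ(Aᶜ ∩ B), where A Δ B = (A ∩ Bᶜ) ∪ (Aᶜ ∩ B) is the symmetric difference. -/
/-- A set function `μ` on the measurable sets of `X` is *grade-2 additive* if
`μ(A ∪ B ∪ C) = μ(A ∪ B) + μ(A ∪ C) + μ(B ∪ C) − μ(A) − μ(B) − μ(C)`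
for all mutually disjoint measurable `A, B, C`. -/
def Grade2Additive {X : Type*} [MeasurableSpace X] (μ : Set X → ℝ) : Prop :=
  ∀ A B C : Set X, MeasurableSet A → MeasurableSet B → MeasurableSet C →
    Disjoint A B → Disjoint A C → Disjoint B C →
    μ (A ∪ B ∪ C) = μ (A ∪ B) + μ (A ∪ C) + μ (B ∪ C) - μ A - μ B - μ C

/-- Theorem 2.1: `μ` is grade-2 additive iff for all measurable `A, B`,
`μ(A ∪ B) = μ(A) + μ(B) − μ(A ∩ B) + μ(A Δ B) − μ(A ∩ Bᶜ) − μ(Aᶜ ∩ B)`. -/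
theorem grade2Additive_iff {X : Type*} [MeasurableSpace X] (μ : Set X → ℝ)
    (hpos : ∀ A : Set X, MeasurableSet A → 0 ≤ μ A) :
    Grade2Additive μ ↔
      ∀ A B : Set X, MeasurableSet A → MeasurableSet B →
        μ (A ∪ B) = μ A + μ B - μ (A ∩ B) + μ ((A ∩ Bᶜ) ∪ (Aᶜ ∩ B))
          - μ (A ∩ Bᶜ) - μ (Aᶜ ∩ B) := by
  constructor
  · intro h A B hA hB
    have h1 : Disjoint (A ∩ Bᶜ) (A ∩ B) := by
      rw [Set.disjoint_left]; intro x hx hx'; exact hx.2 hx'.2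
    have h2 : Disjoint (A ∩ Bᶜ) (Aᶜ ∩ B) := by
      rw [Set.disjoint_left]; intro x hx hx'; exact hx'.1 hx.1
    have h3 : Disjoint (A ∩ B) (Aᶜ ∩ B) := by
      rw [Set.disjoint_left]; intro x hx hx'; exact hx'.1 hx.1
    have key := h (A ∩ Bᶜ) (A ∩ B) (Aᶜ ∩ B) (hA.inter hB.compl) (hA.inter hB)
      (hA.compl.inter hB) h1 h2 h3
    have e1 : A ∩ Bᶜ ∪ A ∩ B ∪ Aᶜ ∩ B = A ∪ B := by
      ext x; by_cases hx : x ∈ A <;> by_cases hx' : x ∈ B <;> simp [hx, hx']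
    have e2 : A ∩ Bᶜ ∪ A ∩ B = A := by
      ext x; by_cases hx' : x ∈ B <;> simp [hx']
    have e3 : A ∩ B ∪ Aᶜ ∩ B = B := by
      ext x; by_cases hx : x ∈ A <;> simp [hx]
    rw [e1, e2, e3] at key
    rw [key]; ring
  · intro h A B C hA hB hC hAB hAC hBC
    have key := h (A ∪ B) (A ∪ C) (hA.union hB) (hA.union hC)
    have e1 : (A ∪ B) ∪ (A ∪ C) = A ∪ B ∪ C := by
      ext x; simp; tauto
    have e2 : (A ∪ B) ∩ (A ∪ C) = A := by
      ext x
      simp only [Set.mem_inter_iff, Set.mem_union]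
      constructor
      · rintro ⟨hb, hc⟩
        rcases hb with h' | h'
        · exact h'
        rcases hc with h' | h'' 
        · exact h'
        · exact absurd (Set.disjoint_left.mp hBC h' h'') (fun x => x)
      · intro h'; exact ⟨Or.inl h', Or.inl h'⟩
    have e3 : (A ∪ B) ∩ (A ∪ C)ᶜ = B := by
      ext x
      simp only [Set.mem_inter_iff, Set.mem_union, Set.mem_compl_iff, not_or]
      constructor
      · rintro ⟨hb, hna, hnc⟩
        rcases hb with h' | h'
        · exact absurd h' hna
        · exact h'
      · intro h'
        exact ⟨Or.inr h', Set.disjoint_right.mp hAB h', Set.disjoint_left.mp hBC h'⟩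
    have e4 : (A ∪ B)ᶜ ∩ (A ∪ C) = C := by
      ext x
      simp only [Set.mem_inter_iff, Set.mem_union, Set.mem_compl_iff, not_or]
      constructor
      · rintro ⟨⟨hna, hnb⟩, hc⟩
        rcases hc with h' | h'
        · exact absurd h' hna
        · exact h'
      · intro h'
        exact ⟨⟨Set.disjoint_right.mp hAC h', Set.disjoint_right.mp hBC h'⟩, Or.inr h'⟩
    have e5 : (A ∪ B) ∩ (A ∪ C)ᶜ ∪ (A ∪ B)ᶜ ∩ (A ∪ C) = B ∪ C := by
      rw [e3, e4]
    rw [e1, e2, e5, e3, e4] at key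
    rw [key]; ring
end

section
/- If μ: 𝒜 → [0,∞) is grade-2 additive, then for any n ≥ 3 and any mutually disjoint sets A₁, …, Aₙ ∈ 𝒜 we have μ(A₁ ∪ ⋯ ∪ Aₙ) = Σ_{1 ≤ i < j ≤ n} μ(Aᵢ ∪ Aⱼ) − (n − 2) Σ_{i=1}^{n} μ(Aᵢ). -/
/-!
Writing `D(B, C) = μ(B ∪ C) - μ(B) - μ(C)` for the defect of additivity, grade-2 additivity
says exactly that `D(B ∪ C, E) = D(B, E) + D(C, E)` for disjoint `B, C, E`; it also forces
`μ(∅) = 0`. Adding the sets one at a time, `μ(A₁ ∪ ⋯ ∪ Aₙ) = Σᵢ μ(Aᵢ) + Σ_{i<j} D(Aᵢ, Aⱼ)`,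
and the claimed formula follows since every `μ(Aᵢ)` occurs in `n - 1` of the pairs.
-/

open Finset

def unionDefect {X : Type*} (μ : Set X → ℝ) (B C : Set X) : ℝ := μ (B ∪ C) - μ B - μ C

namespace Grade2Additive

variable {X : Type*} [MeasurableSpace X] {μ : Set X → ℝ}

theorem apply_empty (hμ : Grade2Additive μ) : μ ∅ = 0 := by
  have h := hμ ∅ ∅ ∅ .empty .empty .empty (by simp) (by simp) (by simp)
  simp only [Set.union_self] at h
  linarith

theorem unionDefect_union_left (hμ : Grade2Additive μ) {B C E : Set X}
    (hB : MeasurableSet B) (hC : MeasurableSet C) (hE : MeasurableSet E)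
    (hBC : Disjoint B C) (hBE : Disjoint B E) (hCE : Disjoint C E) :
    unionDefect μ (B ∪ C) E = unionDefect μ B E + unionDefect μ C E := by
  unfold unionDefect
  linarith [hμ B C E hB hC hE hBC hBE hCE]

variable {ι : Type*} {A : ι → Set X}

theorem unionDefect_biUnion_left [DecidableEq ι] (hμ : Grade2Additive μ)
    (hA : ∀ i, MeasurableSet (A i)) (hd : Pairwise (Function.onFun Disjoint A))
    {E : Set X} (hE : MeasurableSet E) (s : Finset ι) (hsE : ∀ i ∈ s, Disjoint (A i) E) :
    unionDefect μ (⋃ i ∈ s, A i) E = ∑ i ∈ s, unionDefect μ (A i) E := by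
  induction s using Finset.induction_on with
  | empty => simp [unionDefect, hμ.apply_empty]
  | insert a s ha ih =>
    rw [set_biUnion_insert, sum_insert ha, ← ih fun i hi ↦ hsE i (mem_insert_of_mem hi)]
    refine hμ.unionDefect_union_left (hA a) (s.measurableSet_biUnion fun i _ ↦ hA i) hE
      ?_ (hsE a (mem_insert_self a s)) (Set.disjoint_iUnion₂_left.2 fun i hi ↦ hsE i ?_)
    · exact Set.disjoint_iUnion₂_right.2 fun i hi ↦ hd (ne_of_mem_of_not_mem hi ha).symm
    · exact mem_insert_of_mem hi

theorem apply_biUnion [LinearOrder ι] (hμ : Grade2Additive μ)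
    (hA : ∀ i, MeasurableSet (A i)) (hd : Pairwise (Function.onFun Disjoint A)) (s : Finset ι) :
    μ (⋃ i ∈ s, A i) =
      ∑ i ∈ s, μ (A i) + ∑ i ∈ s, ∑ j ∈ s with i < j, unionDefect μ (A i) (A j) := by
  induction s using Finset.induction_on_max with
  | empty => simp [hμ.apply_empty]
  | insert a s hlt ih =>
    have ha : a ∉ s := fun h ↦ lt_irrefl a (hlt a h)
    have hpairs_max : {j ∈ insert a s | a < j} = ∅ :=
      filter_eq_empty_iff.2 fun j hj ↦ not_lt.2 <| (mem_insert.1 hj).elim le_of_eq (hlt j · |>.le)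
    have hpairs : ∀ i ∈ s, ∑ j ∈ insert a s with i < j, unionDefect μ (A i) (A j) =
        unionDefect μ (A i) (A a) + ∑ j ∈ s with i < j, unionDefect μ (A i) (A j) := fun i hi ↦ by
      rw [filter_insert, if_pos (hlt i hi), sum_insert fun h ↦ ha (mem_filter.1 h).1]
    have hsplit : μ (A a ∪ ⋃ i ∈ s, A i) =
        μ (A a) + μ (⋃ i ∈ s, A i) + unionDefect μ (⋃ i ∈ s, A i) (A a) := by
      rw [unionDefect, Set.union_comm]; ring
    rw [set_biUnion_insert, hsplit, hμ.unionDefect_biUnion_left hA hd (hA a) s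
      fun i hi ↦ hd (ne_of_mem_of_not_mem hi ha), ih, sum_insert ha, sum_insert ha, hpairs_max,
      sum_empty, sum_congr rfl hpairs, sum_add_distrib]
    ring

end Grade2Additive

theorem Finset.sum_sum_Ioi_add_add_sum {ι M : Type*} [Fintype ι] [LinearOrder ι]
    [LocallyFiniteOrderTop ι] [LocallyFiniteOrderBot ι] [AddCommMonoid M] (f : ι → M) :
    ∑ i, ∑ j ∈ Ioi i, (f i + f j) + ∑ i, f i = Fintype.card ι • ∑ i, f i := by
  rw [sum_sum_Ioi_add_eq_sum_sum_off_diag fun (_ i : ι) ↦ f i, ← sum_add_distrib, smul_sum]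
  refine sum_congr rfl fun i _ ↦ ?_
  rw [sum_const, ← succ_nsmul, card_compl, card_singleton,
    Nat.sub_add_cancel (Fintype.card_pos_iff.2 ⟨i⟩)]

theorem grade2Additive_nSets_general {X : Type*} [MeasurableSpace X] (μ : Set X → ℝ)
    (hμ : Grade2Additive μ) (n : ℕ)
    (A : Fin n → Set X) (hA : ∀ i, MeasurableSet (A i))
    (hd : Pairwise (Function.onFun Disjoint A)) :
    μ (⋃ i, A i) =
      (∑ i : Fin n, ∑ j ∈ Finset.Ioi i, μ (A i ∪ A j))
        - ((n : ℝ) - 2) * ∑ i : Fin n, μ (A i) := by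
  have h := hμ.apply_biUnion hA hd univ
  simp only [mem_univ, Set.iUnion_true, filter_lt_eq_Ioi, unionDefect] at h
  have hcount := sum_sum_Ioi_add_add_sum fun i ↦ μ (A i)
  rw [Fintype.card_fin, nsmul_eq_mul] at hcount
  simp only [sub_sub, sum_sub_distrib] at h ⊢
  linarith

/-- Theorem 2.2: if `μ` is grade-2 additive, then for any `n ≥ 3` and mutually
disjoint measurable `A₁, …, Aₙ`,
`μ(A₁ ∪ ⋯ ∪ Aₙ) = Σ_{i<j} μ(Aᵢ ∪ Aⱼ) − (n−2) Σᵢ μ(Aᵢ)`. -/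
theorem grade2Additive_nSets {X : Type*} [MeasurableSpace X] (μ : Set X → ℝ)
    (hpos : ∀ A : Set X, MeasurableSet A → 0 ≤ μ A)
    (hμ : Grade2Additive μ) (n : ℕ) (hn : 3 ≤ n)
    (A : Fin n → Set X) (hA : ∀ i, MeasurableSet (A i))
    (hd : Pairwise (Function.onFun Disjoint A)) :
    μ (⋃ i, A i) =
      (∑ i : Fin n, ∑ j ∈ Finset.Ioi i, μ (A i ∪ A j))
        - ((n : ℝ) - 2) * ∑ i : Fin n, μ (A i) :=
  grade2Additive_nSets_general μ hμ n A hA hd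
end

section
/- Let (X, 𝒜, μ) be a q-measure space. A set A ∈ 𝒜 is μ-splitting if and only if A belongs to the μ-center Z_μ, i.e. μ(B) = μ(B ∩ A) + μ(B ∩ Aᶜ) for all B ∈ 𝒜 if and only if μ(A ∪ B) = μ(A) + μ(B) − μ(A ∩ B) for all B ∈ 𝒜. -/
open Filter Topology

/-- Continuity of a set function along increasing and decreasing sequences. -/
def QContinuous {X : Type*} [MeasurableSpace X] (μ : Set X → ℝ) : Prop :=
  (∀ A : ℕ → Set X, (∀ i, MeasurableSet (A i)) → Monotone A →
    Tendsto (fun i => μ (A i)) atTop (𝓝 (μ (⋃ i, A i)))) ∧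
  (∀ A : ℕ → Set X, (∀ i, MeasurableSet (A i)) → Antitone A →
    Tendsto (fun i => μ (A i)) atTop (𝓝 (μ (⋂ i, A i))))

/-- A `q`-measure: a nonnegative, grade-2 additive, continuous set function. -/
structure IsQMeasure {X : Type*} [MeasurableSpace X] (μ : Set X → ℝ) : Prop where
  nonneg : ∀ A : Set X, MeasurableSet A → 0 ≤ μ A
  grade2 : Grade2Additive μ
  cont : QContinuous μ

/-- Theorem 2.3(a): `A` is `μ`-splitting iff `A` belongs to the `μ`-center, i.e.
`μ(B) = μ(B ∩ A) + μ(B ∩ Aᶜ)` for all measurable `B` iff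
`μ(A ∪ B) = μ(A) + μ(B) − μ(A ∩ B)` for all measurable `B`. -/
theorem splitting_iff_center {X : Type*} [MeasurableSpace X] (μ : Set X → ℝ)
    (hμ : IsQMeasure μ) (A : Set X) (hA : MeasurableSet A) :
    (∀ B : Set X, MeasurableSet B → μ B = μ (B ∩ A) + μ (B ∩ Aᶜ)) ↔
      (∀ B : Set X, MeasurableSet B → μ (A ∪ B) = μ A + μ B - μ (A ∩ B)) := by
  have h0 : μ ∅ = 0 := by
    have := hμ.grade2 ∅ ∅ ∅ MeasurableSet.empty MeasurableSet.empty MeasurableSet.empty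
      disjoint_bot_left disjoint_bot_left disjoint_bot_left
    simp only [Set.union_empty] at this
    linarith
  constructor
  · intro h B hB
    have h1 := h (A ∪ B) (hA.union hB)
    have h2 := h B hB
    have e1 : (A ∪ B) ∩ A = A := by ext x; simp; tauto
    have e2 : (A ∪ B) ∩ Aᶜ = B ∩ Aᶜ := by ext x; simp; tauto
    rw [e1, e2] at h1
    rw [Set.inter_comm A B]
    linarith
  · intro h B hB
    have h1 := h B hB
    have h2 := h (B ∩ Aᶜ) (hB.inter hA.compl)
    have e1 : A ∪ B ∩ Aᶜ = A ∪ B := by ext x; simp; tauto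
    have e2 : A ∩ (B ∩ Aᶜ) = ∅ := by ext x; simp; tauto
    rw [e1, e2, h0] at h2
    rw [Set.inter_comm A B] at h1
    linarith
end

section
/- Let (X, 𝒜, μ) be a q-measure space. The μ-center Z_μ is a sub-σ-algebra of 𝒜 and the restriction of μ to Z_μ is a (σ-additive) measure. Moreover, if A₁, A₂, … ∈ Z_μ are mutually disjoint, then for every B ∈ 𝒜 we have μ(∪ᵢ (B ∩ Aᵢ)) = Σᵢ μ(B ∩ Aᵢ). -/
open Filter Topology

/-- The `μ`-center `Z_μ`: measurable sets `A` that are `μ`-compatible with every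
measurable set `B`, i.e. `μ(A ∪ B) = μ(A) + μ(B) − μ(A ∩ B)`. -/
def muCenter {X : Type*} [MeasurableSpace X] (μ : Set X → ℝ) : Set (Set X) :=
  {A | MeasurableSet A ∧ ∀ B : Set X, MeasurableSet B →
    μ (A ∪ B) = μ A + μ B - μ (A ∩ B)}

section Aux
variable {X : Type*} [MeasurableSpace X] {μ : Set X → ℝ}

lemma qm_empty (hμ : IsQMeasure μ) : μ (∅ : Set X) = 0 := by
  have h := hμ.grade2 ∅ ∅ ∅ MeasurableSet.empty MeasurableSet.empty MeasurableSet.empty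
    disjoint_bot_left disjoint_bot_left disjoint_bot_left
  simp only [Set.union_empty, Set.empty_union] at h
  linarith

/-- Splitting lemma: a central set splits the measure of any measurable set. -/
lemma qm_split (hμ : IsQMeasure μ) {A : Set X} (hA : A ∈ muCenter μ)
    {B : Set X} (hB : MeasurableSet B) : μ B = μ (B ∩ A) + μ (B ∩ Aᶜ) := by
  have h1 := hA.2 B hB
  have h2 := hA.2 (B ∩ Aᶜ) (hB.inter hA.1.compl)
  have e1 : A ∪ B ∩ Aᶜ = A ∪ B := by
    ext x; by_cases hx : x ∈ A <;> simp [hx]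
  have e2 : A ∩ (B ∩ Aᶜ) = ∅ := by
    ext x; simp; tauto
  have e3 : B ∩ A = A ∩ B := Set.inter_comm _ _
  rw [e1, e2, qm_empty hμ] at h2
  rw [e3]; linarith

/-- If `C ⊆ A`, `D` disjoint from `A`, `A` central, then `μ` is additive on `C ∪ D`. -/
lemma qm_parts (hμ : IsQMeasure μ) {A C D : Set X} (hA : A ∈ muCenter μ)
    (hC : MeasurableSet C) (hD : MeasurableSet D) (hCA : C ⊆ A)
    (hDA : Disjoint D A) : μ (C ∪ D) = μ C + μ D := by
  have h := qm_split hμ hA (hC.union hD)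
  have e1 : (C ∪ D) ∩ A = C := by
    ext x
    constructor
    · rintro ⟨hx | hx, hxA⟩
      · exact hx
      · exact absurd hxA (Set.disjoint_left.mp hDA hx)
    · exact fun hx => ⟨Or.inl hx, hCA hx⟩
  have e2 : (C ∪ D) ∩ Aᶜ = D := by
    ext x
    constructor
    · rintro ⟨hx | hx, hxA⟩
      · exact absurd (hCA hx) hxA
      · exact hx
    · exact fun hx => ⟨Or.inr hx, Set.disjoint_left.mp hDA hx⟩
  rw [e1, e2] at h
  exact h

lemma qm_emptyMem (hμ : IsQMeasure μ) : (∅ : Set X) ∈ muCenter μ := by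
  refine ⟨MeasurableSet.empty, fun B hB => ?_⟩
  simp [qm_empty hμ]

lemma qm_univMem (hμ : IsQMeasure μ) : (Set.univ : Set X) ∈ muCenter μ := by
  refine ⟨MeasurableSet.univ, fun B hB => ?_⟩
  simp only [Set.univ_union, Set.univ_inter]
  ring

lemma qm_complMem (hμ : IsQMeasure μ) {A : Set X} (hA : A ∈ muCenter μ) :
    Aᶜ ∈ muCenter μ := by
  refine ⟨hA.1.compl, fun B hB => ?_⟩
  have h1 := qm_split hμ hA (hA.1.compl.union hB)
  have e1 : (Aᶜ ∪ B) ∩ A = B ∩ A := by ext x; simp; tauto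
  have e2 : (Aᶜ ∪ B) ∩ Aᶜ = Aᶜ := by ext x; simp; tauto
  have h2 := qm_split hμ hA hB
  have e3 : Aᶜ ∩ B = B ∩ Aᶜ := Set.inter_comm _ _
  rw [e1, e2] at h1
  rw [e3]; linarith

lemma qm_unionMem (hμ : IsQMeasure μ) {A₁ A₂ : Set X} (hA₁ : A₁ ∈ muCenter μ)
    (hA₂ : A₂ ∈ muCenter μ) : A₁ ∪ A₂ ∈ muCenter μ := by
  refine ⟨hA₁.1.union hA₂.1, fun B hB => ?_⟩
  have hB' : MeasurableSet (B ∩ A₁ᶜ) := hB.inter hA₁.1.compl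
  -- star: compatibility of A₂ ∩ A₁ᶜ with B ∩ A₁ᶜ
  have hstar : μ (A₂ ∩ A₁ᶜ ∪ B ∩ A₁ᶜ)
      = μ (A₂ ∩ A₁ᶜ) + μ (B ∩ A₁ᶜ) - μ (A₂ ∩ A₁ᶜ ∩ (B ∩ A₁ᶜ)) := by
    have h := hA₂.2 (B ∩ A₁ᶜ) hB'
    have hsplit := qm_split hμ hA₁ (hA₂.1.union hB')
    have e1 : (A₂ ∪ B ∩ A₁ᶜ) ∩ A₁ = A₂ ∩ A₁ := by ext x; simp; tauto
    have e2 : (A₂ ∪ B ∩ A₁ᶜ) ∩ A₁ᶜ = A₂ ∩ A₁ᶜ ∪ B ∩ A₁ᶜ := by ext x; simp; tauto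
    have e3 : A₂ ∩ (B ∩ A₁ᶜ) = A₂ ∩ A₁ᶜ ∩ (B ∩ A₁ᶜ) := by ext x; simp; tauto
    have hsplitA₂ := qm_split hμ hA₁ hA₂.1
    have e4 : A₂ ∩ A₁ = A₁ ∩ A₂ := Set.inter_comm _ _
    rw [e1, e2, e4] at hsplit
    rw [e3] at h
    rw [e4] at hsplitA₂
    linarith
  have hbig := qm_split hμ hA₁ ((hA₁.1.union hA₂.1).union hB)
  have f2 : (A₁ ∪ A₂ ∪ B) ∩ A₁ = A₁ := by ext x; simp; tauto
  have f3 : (A₁ ∪ A₂ ∪ B) ∩ A₁ᶜ = A₂ ∩ A₁ᶜ ∪ B ∩ A₁ᶜ := by ext x; simp; tauto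
  rw [f2, f3] at hbig
  have hU := qm_split hμ hA₁ (hA₁.1.union hA₂.1)
  have g1 : (A₁ ∪ A₂) ∩ A₁ = A₁ := by ext x; simp; tauto
  have g2 : (A₁ ∪ A₂) ∩ A₁ᶜ = A₂ ∩ A₁ᶜ := by ext x; simp; tauto
  rw [g1, g2] at hU
  have hBsplit := qm_split hμ hA₁ hB
  have hIicp := qm_split hμ hA₁ ((hA₁.1.union hA₂.1).inter hB)
  have g3 : (A₁ ∪ A₂) ∩ B ∩ A₁ = B ∩ A₁ := by ext x; simp; tauto
  have g4 : (A₁ ∪ A₂) ∩ B ∩ A₁ᶜ = A₂ ∩ A₁ᶜ ∩ (B ∩ A₁ᶜ) := by ext x; simp; tauto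
  rw [g3, g4] at hIicp
  linarith

end Aux

section Aux2
variable {X : Type*} [MeasurableSpace X] {μ : Set X → ℝ}

/-- Main countable lemma. -/
lemma qm_hasSum (hμ : IsQMeasure μ) (A : ℕ → Set X) (hA : ∀ i, A i ∈ muCenter μ)
    (hd : Pairwise (Function.onFun Disjoint A)) {B : Set X} (hB : MeasurableSet B) :
    HasSum (fun i => μ (B ∩ A i)) (μ (⋃ i, B ∩ A i)) := by
  set T : ℕ → Set X := fun n => ⋃ i ∈ Finset.range n, A i with hT
  have hTsucc : ∀ n, T (n + 1) = T n ∪ A n := by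
    intro n
    ext x
    simp only [hT, Set.mem_iUnion, Finset.mem_range, Set.mem_union,
      Nat.lt_succ_iff_lt_or_eq]
    constructor
    · rintro ⟨i, hi | rfl, hxi⟩
      exacts [Or.inl ⟨i, hi, hxi⟩, Or.inr hxi]
    · rintro (⟨i, hi, hxi⟩ | hx)
      exacts [⟨i, Or.inl hi, hxi⟩, ⟨n, Or.inr rfl, hx⟩]
  have hTmem : ∀ n, T n ∈ muCenter μ := by
    intro n
    induction n with
    | zero => simpa [hT] using qm_emptyMem hμ
    | succ n ih =>
        rw [hTsucc]
        exact qm_unionMem hμ ih (hA n)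
  have hTdisj : ∀ n, Disjoint (T n) (A n) := by
    intro n
    simp only [hT, Set.disjoint_iUnion_left]
    intro i hi
    exact hd (Finset.mem_range.mp hi).ne
  have hTmono : Monotone T := by
    intro m n h x hx
    simp only [hT, Set.mem_iUnion, Finset.mem_range] at hx ⊢
    obtain ⟨i, hi, hxi⟩ := hx
    exact ⟨i, lt_of_lt_of_le hi h, hxi⟩
  have hps : ∀ n, μ (B ∩ T n) = ∑ i ∈ Finset.range n, μ (B ∩ A i) := by
    intro n
    induction n with
    | zero => simp [hT, qm_empty hμ]
    | succ n ih =>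
        have e : B ∩ T (n + 1) = (B ∩ T n) ∪ (B ∩ A n) := by
          rw [hTsucc, Set.inter_union_distrib_left]
        rw [e, qm_parts hμ (hTmem n) (hB.inter (hTmem n).1) (hB.inter (hA n).1)
          Set.inter_subset_right (Set.disjoint_of_subset_left Set.inter_subset_right
            (hTdisj n).symm), ih, Finset.sum_range_succ]
  have hmono : Monotone (fun n => B ∩ T n) := fun m n h =>
    Set.inter_subset_inter_right _ (hTmono h)
  have hmeas : ∀ n, MeasurableSet (B ∩ T n) := fun n => hB.inter (hTmem n).1
  have hUeq : (⋃ n, B ∩ T n) = ⋃ i, B ∩ A i := by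
    ext x
    simp only [hT, Set.mem_iUnion, Set.mem_inter_iff, Finset.mem_range]
    constructor
    · rintro ⟨n, hxB, i, hi, hxi⟩
      exact ⟨i, hxB, hxi⟩
    · rintro ⟨i, hxB, hxi⟩
      exact ⟨i + 1, hxB, i, i.lt_succ_self, hxi⟩
  have ht := hμ.cont.1 (fun n => B ∩ T n) hmeas hmono
  rw [hUeq] at ht
  have htsum : Tendsto (fun n => ∑ i ∈ Finset.range n, μ (B ∩ A i)) atTop
      (𝓝 (μ (⋃ i, B ∩ A i))) := by
    refine ht.congr fun n => hps n
  have hnn : ∀ i, 0 ≤ μ (B ∩ A i) := fun i => hμ.nonneg _ (hB.inter (hA i).1)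
  have hmonoSum : Monotone (fun n => ∑ i ∈ Finset.range n, μ (B ∩ A i)) := by
    intro a b h
    exact Finset.sum_le_sum_of_subset_of_nonneg (Finset.range_subset_range.mpr h)
      (fun i _ _ => hnn i)
  have hsummable : Summable (fun i => μ (B ∩ A i)) :=
    summable_of_sum_range_le hnn (fun n => hmonoSum.ge_of_tendsto htsum n)
  exact hsummable.hasSum_iff_tendsto_nat.mpr htsum

lemma qm_iUnionMem (hμ : IsQMeasure μ) (A : ℕ → Set X) (hA : ∀ i, A i ∈ muCenter μ) :
    (⋃ i, A i) ∈ muCenter μ := by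
  set T : ℕ → Set X := fun n => ⋃ i ∈ Finset.range n, A i with hT
  have hTsucc : ∀ n, T (n + 1) = T n ∪ A n := by
    intro n
    ext x
    simp only [hT, Set.mem_iUnion, Finset.mem_range, Set.mem_union,
      Nat.lt_succ_iff_lt_or_eq]
    constructor
    · rintro ⟨i, hi | rfl, hxi⟩
      exacts [Or.inl ⟨i, hi, hxi⟩, Or.inr hxi]
    · rintro (⟨i, hi, hxi⟩ | hx)
      exacts [⟨i, Or.inl hi, hxi⟩, ⟨n, Or.inr rfl, hx⟩]
  have hTmem : ∀ n, T n ∈ muCenter μ := by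
    intro n
    induction n with
    | zero => simpa [hT] using qm_emptyMem hμ
    | succ n ih =>
        rw [hTsucc]
        exact qm_unionMem hμ ih (hA n)
  have hTmono : Monotone T := by
    intro m n h x hx
    simp only [hT, Set.mem_iUnion, Finset.mem_range] at hx ⊢
    obtain ⟨i, hi, hxi⟩ := hx
    exact ⟨i, lt_of_lt_of_le hi h, hxi⟩
  have hUT : (⋃ n, T n) = ⋃ i, A i := by
    ext x
    simp only [hT, Set.mem_iUnion, Finset.mem_range]
    constructor
    · rintro ⟨n, i, hi, hxi⟩
      exact ⟨i, hxi⟩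
    · rintro ⟨i, hxi⟩
      exact ⟨i + 1, i, i.lt_succ_self, hxi⟩
  have hUmeas : MeasurableSet (⋃ i, A i) := MeasurableSet.iUnion (fun i => (hA i).1)
  refine ⟨hUmeas, fun B hB => ?_⟩
  have htU : Tendsto (fun n => μ (T n ∪ B)) atTop (𝓝 (μ ((⋃ i, A i) ∪ B))) := by
    have := hμ.cont.1 (fun n => T n ∪ B) (fun n => (hTmem n).1.union hB)
      (fun m n h => Set.union_subset_union_left _ (hTmono h))
    have e : (⋃ n, T n ∪ B) = (⋃ i, A i) ∪ B := by
      rw [← hUT]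
      ext x
      simp only [Set.mem_iUnion, Set.mem_union]
      constructor
      · rintro ⟨n, hx | hx⟩
        exacts [Or.inl ⟨n, hx⟩, Or.inr hx]
      · rintro (⟨n, hx⟩ | hx)
        exacts [⟨n, Or.inl hx⟩, ⟨0, Or.inr hx⟩]
    rwa [e] at this
  have htT : Tendsto (fun n => μ (T n)) atTop (𝓝 (μ (⋃ i, A i))) := by
    have := hμ.cont.1 T (fun n => (hTmem n).1) hTmono
    rwa [hUT] at this
  have htI : Tendsto (fun n => μ (T n ∩ B)) atTop (𝓝 (μ ((⋃ i, A i) ∩ B))) := by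
    have := hμ.cont.1 (fun n => T n ∩ B) (fun n => (hTmem n).1.inter hB)
      (fun m n h => Set.inter_subset_inter_left _ (hTmono h))
    have e : (⋃ n, T n ∩ B) = (⋃ i, A i) ∩ B := by
      rw [← hUT]
      ext x
      simp only [Set.mem_iUnion, Set.mem_inter_iff]
      constructor
      · rintro ⟨n, hx, hxB⟩
        exact ⟨⟨n, hx⟩, hxB⟩
      · rintro ⟨⟨n, hx⟩, hxB⟩
        exact ⟨n, hx, hxB⟩
    rwa [e] at this
  have heach : ∀ n, μ (T n ∪ B) = μ (T n) + μ B - μ (T n ∩ B) :=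
    fun n => (hTmem n).2 B hB
  have htU' : Tendsto (fun n => μ (T n ∪ B)) atTop
      (𝓝 (μ (⋃ i, A i) + μ B - μ ((⋃ i, A i) ∩ B))) := by
    have hc : Tendsto (fun _ : ℕ => μ B) atTop (𝓝 (μ B)) := tendsto_const_nhds
    have := (htT.add hc).sub htI
    exact this.congr fun n => (heach n).symm
  exact tendsto_nhds_unique htU htU'

end Aux2

/-- Theorem 2.3(b): the `μ`-center `Z_μ` is a sub-σ-algebra of the measurable sets
(it contains `∅` and `univ`, and is closed under complements and countable unions),
the restriction of `μ` to `Z_μ` is σ-additive (with `μ ∅ = 0`), and moreover for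
mutually disjoint `A₁, A₂, … ∈ Z_μ` and any measurable `B` we have
`μ(⋃ᵢ (B ∩ Aᵢ)) = Σᵢ μ(B ∩ Aᵢ)`. -/
theorem muCenter_subSigmaAlgebra_and_measure {X : Type*} [MeasurableSpace X]
    (μ : Set X → ℝ) (hμ : IsQMeasure μ) :
    (∅ : Set X) ∈ muCenter μ ∧
    (Set.univ : Set X) ∈ muCenter μ ∧
    (∀ A : Set X, A ∈ muCenter μ → Aᶜ ∈ muCenter μ) ∧
    (∀ A : ℕ → Set X, (∀ i, A i ∈ muCenter μ) → (⋃ i, A i) ∈ muCenter μ) ∧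
    μ (∅ : Set X) = 0 ∧
    (∀ A : ℕ → Set X, (∀ i, A i ∈ muCenter μ) →
      Pairwise (Function.onFun Disjoint A) →
      HasSum (fun i => μ (A i)) (μ (⋃ i, A i))) ∧
    (∀ A : ℕ → Set X, (∀ i, A i ∈ muCenter μ) →
      Pairwise (Function.onFun Disjoint A) →
      ∀ B : Set X, MeasurableSet B →
        HasSum (fun i => μ (B ∩ A i)) (μ (⋃ i, B ∩ A i))) := by
  refine ⟨qm_emptyMem hμ, qm_univMem hμ, fun A hA => qm_complMem hμ hA,
    fun A hA => qm_iUnionMem hμ A hA, qm_empty hμ, ?_, ?_⟩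
  · intro A hA hd
    have := qm_hasSum hμ A hA hd MeasurableSet.univ
    simpa [Set.univ_inter] using this
  · intro A hA hd B hB
    exact qm_hasSum hμ A hA hd hB
end

section
/- Let X = [0,1], let ν be Lebesgue measure on the Borel σ-algebra ℬ(X), and define μ: ℬ(X) → [0,∞) by μ(A) = ν(A) − 2ν({x ∈ A : x + 3/4 ∈ A}). Then for any A ∈ ℬ(X) the following statements are equivalent: (a) A ∈ Z_μ; (b) A μ Aᶜ; (c) μ(A) + μ(Aᶜ) = 1/2. -/
open MeasureTheory Set

/-- The `q`-measure of Example 4: for a Borel subset `A` of `X = [0,1]`,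
`μ(A) = ν(A) − 2 ν({x ∈ A : x + 3/4 ∈ A})`, where `ν` is Lebesgue measure. -/
noncomputable def exampleFourMeasure (A : Set ℝ) : ℝ :=
  (volume A).toReal - 2 * (volume {x : ℝ | x ∈ A ∧ x + 3 / 4 ∈ A}).toReal

namespace ExampleFourAux

/-- The "annihilating pairs" set. -/
def D (S : Set ℝ) : Set ℝ := {x : ℝ | x ∈ S ∧ x + 3 / 4 ∈ S}

lemma D_eq (S : Set ℝ) : D S = S ∩ (fun x : ℝ => x + 3 / 4) ⁻¹' S := rfl

lemma measurable_D {S : Set ℝ} (hS : MeasurableSet S) : MeasurableSet (D S) := by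
  rw [D_eq]
  exact hS.inter (hS.preimage (measurable_id.add_const _))

lemma D_subset {S : Set ℝ} (hS : S ⊆ Icc (0 : ℝ) 1) : D S ⊆ Icc (0 : ℝ) (1 / 4) := by
  rintro x ⟨h1, h2⟩
  have r1 := hS h1
  have r2 := hS h2
  simp only [mem_Icc] at *
  constructor <;> linarith [r1.1, r1.2, r2.1, r2.2]

lemma vol_ne_top {S : Set ℝ} (hS : S ⊆ Icc (0 : ℝ) 1) : volume S ≠ ⊤ := by
  have : volume S ≤ volume (Icc (0 : ℝ) 1) := measure_mono hS
  rw [Real.volume_Icc] at this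
  exact ne_top_of_le_ne_top (by simp) this

lemma mu_eq (S : Set ℝ) :
    exampleFourMeasure S = (volume S).toReal - 2 * (volume (D S)).toReal := rfl

lemma D_Icc : D (Icc (0 : ℝ) 1) = Icc (0 : ℝ) (1 / 4) := by
  ext x
  simp only [D, mem_Icc, mem_setOf_eq]
  constructor
  · rintro ⟨⟨a, b⟩, c, d⟩; constructor <;> linarith
  · rintro ⟨a, b⟩; refine ⟨⟨by linarith, by linarith⟩, by linarith, by linarith⟩

lemma mu_Icc : exampleFourMeasure (Icc (0 : ℝ) 1) = 1 / 2 := by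
  rw [mu_eq, D_Icc, Real.volume_Icc, Real.volume_Icc]
  rw [ENNReal.toReal_ofReal (by norm_num), ENNReal.toReal_ofReal (by norm_num)]
  norm_num

lemma mu_empty : exampleFourMeasure (∅ : Set ℝ) = 0 := by
  have : D (∅ : Set ℝ) = ∅ := by ext x; simp [D]
  rw [mu_eq, this]; simp

end ExampleFourAux

open ExampleFourAux in
/-- Theorem 2.4: for `μ` as in Example 4 on the Borel subsets of `X = [0,1]`
(complements taken inside `[0,1]`), the following are equivalent for a Borel set
`A ⊆ [0,1]`: (a) `A` is in the `μ`-center, i.e. `A` is `μ`-compatible with every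
Borel `B ⊆ [0,1]`; (b) `A` is `μ`-compatible with `Aᶜ = [0,1] \ A`;
(c) `μ(A) + μ(Aᶜ) = 1/2`. -/
theorem exampleFour_center_iff (A : Set ℝ) (hA : MeasurableSet A)
    (hA1 : A ⊆ Set.Icc (0 : ℝ) 1) :
    ((∀ B : Set ℝ, MeasurableSet B → B ⊆ Set.Icc (0 : ℝ) 1 →
        exampleFourMeasure (A ∪ B) =
          exampleFourMeasure A + exampleFourMeasure B - exampleFourMeasure (A ∩ B)) ↔
      exampleFourMeasure (A ∪ (Set.Icc (0 : ℝ) 1 \ A)) =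
        exampleFourMeasure A + exampleFourMeasure (Set.Icc (0 : ℝ) 1 \ A)
          - exampleFourMeasure (A ∩ (Set.Icc (0 : ℝ) 1 \ A))) ∧
    ((exampleFourMeasure (A ∪ (Set.Icc (0 : ℝ) 1 \ A)) =
        exampleFourMeasure A + exampleFourMeasure (Set.Icc (0 : ℝ) 1 \ A)
          - exampleFourMeasure (A ∩ (Set.Icc (0 : ℝ) 1 \ A))) ↔
      exampleFourMeasure A + exampleFourMeasure (Set.Icc (0 : ℝ) 1 \ A) = 1 / 2) := by
  set A' : Set ℝ := Icc (0 : ℝ) 1 \ A with hA'def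
  have hA'meas : MeasurableSet A' := measurableSet_Icc.diff hA
  have hA'1 : A' ⊆ Icc (0 : ℝ) 1 := diff_subset
  have hunion : A ∪ A' = Icc (0 : ℝ) 1 := Set.union_diff_cancel hA1
  have hinter : A ∩ A' = (∅ : Set ℝ) := by
    rw [hA'def]; ext x; simp only [mem_inter_iff, mem_diff, mem_empty_iff_false]; tauto
  -- the (b) ↔ (c) equivalence
  have hbc : (exampleFourMeasure (A ∪ A') =
        exampleFourMeasure A + exampleFourMeasure A' - exampleFourMeasure (A ∩ A')) ↔
      exampleFourMeasure A + exampleFourMeasure A' = 1 / 2 := by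
    rw [hunion, hinter, mu_Icc, mu_empty]
    constructor <;> intro h <;> linarith
  refine ⟨?_, hbc⟩
  constructor
  · intro h; exact h A' hA'meas hA'1
  -- the hard direction: (b) ⟹ (a)
  intro hb B hB hB1
  have hc : exampleFourMeasure A + exampleFourMeasure A' = 1 / 2 := hbc.mp hb
  -- the "bad" set E
  set TA : Set ℝ := (fun x : ℝ => x + 3 / 4) ⁻¹' A with hTAdef
  have hTAmeas : MeasurableSet TA := hA.preimage (measurable_id.add_const _)
  set E : Set ℝ := Icc (0 : ℝ) (1 / 4) ∩ ((A \ TA) ∪ (TA \ A)) with hEdef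
  have hEmeas : MeasurableSet E :=
    measurableSet_Icc.inter ((hA.diff hTAmeas).union (hTAmeas.diff hA))
  -- Icc 0 (1/4) = D A ∪ D A' ∪ E  (pairwise disjoint)
  have hcover : Icc (0 : ℝ) (1 / 4) = (D A ∪ D A') ∪ E := by
    refine Subset.antisymm ?_
      (union_subset (union_subset (D_subset hA1) (D_subset hA'1)) inter_subset_left)
    intro x hx
    obtain ⟨h0, h4⟩ := hx
    have hx1 : x ∈ Icc (0 : ℝ) 1 := by simp only [mem_Icc]; constructor <;> linarith
    have hx2 : x + 3 / 4 ∈ Icc (0 : ℝ) 1 := by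
      simp only [mem_Icc]; constructor <;> linarith
    have hxE : x ∈ Icc (0 : ℝ) (1 / 4) := ⟨h0, h4⟩
    simp only [mem_union, D, mem_setOf_eq, hEdef, mem_inter_iff, hA'def, mem_diff,
      hTAdef, mem_preimage]
    by_cases ha : x ∈ A <;> by_cases ha' : x + 3 / 4 ∈ A <;> tauto
  have hdisj1 : Disjoint (D A) (D A') := by
    rw [Set.disjoint_left]
    rintro x ⟨h1, _⟩ ⟨h2, _⟩
    exact h2.2 h1
  have hdisj2 : Disjoint (D A ∪ D A') E := by
    rw [Set.disjoint_left]
    rintro x (⟨h1, h2⟩ | ⟨h1, h2⟩) ⟨_, (⟨e1, e2⟩ | ⟨e1, e2⟩)⟩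
    · exact e2 h2
    · exact e2 h1
    · exact h1.2 e1
    · exact h2.2 e1
  -- from (c): vol (D A) + vol (D A') = 1/4 in ℝ, hence vol E = 0
  have hνA : (volume A).toReal + (volume A').toReal = 1 := by
    have : volume A + volume A' = volume (Icc (0 : ℝ) 1) := by
      rw [← hunion, measure_union (disjoint_sdiff_right) hA'meas]
    rw [Real.volume_Icc] at this
    have h2 := congrArg ENNReal.toReal this
    rw [ENNReal.toReal_add (vol_ne_top hA1) (vol_ne_top hA'1),
      ENNReal.toReal_ofReal (by norm_num)] at h2
    linarith
  have hd : (volume (D A)).toReal + (volume (D A')).toReal = 1 / 4 := by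
    rw [mu_eq, mu_eq] at hc; linarith
  have hE0 : volume E = 0 := by
    have hmeq : volume (Icc (0 : ℝ) (1 / 4)) = volume (D A) + volume (D A') + volume E := by
      rw [hcover, measure_union hdisj2 hEmeas, measure_union hdisj1 (measurable_D hA'meas)]
    have hDA := vol_ne_top (fun x hx => Icc_subset_Icc le_rfl (by norm_num) (D_subset hA1 hx))
    have hDA' := vol_ne_top (fun x hx => Icc_subset_Icc le_rfl (by norm_num) (D_subset hA'1 hx))
    have hsum : volume (D A) + volume (D A') = ENNReal.ofReal (1 / 4) := by
      rw [← ENNReal.ofReal_toReal (ENNReal.add_ne_top.mpr ⟨hDA, hDA'⟩),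
        ENNReal.toReal_add hDA hDA', hd]
    rw [hsum, Real.volume_Icc] at hmeq
    norm_num at hmeq
    have hz : ENNReal.ofReal (1 / 4) + 0 = ENNReal.ofReal (1 / 4) + volume E := by
      rw [add_zero]; exact hmeq
    exact ((ENNReal.add_right_inj ENNReal.ofReal_ne_top).mp hz).symm
  -- D-level inclusion–exclusion for arbitrary B
  have hDcap : D (A ∩ B) = D A ∩ D B := by
    ext x; simp only [D, mem_inter_iff, mem_setOf_eq]; tauto
  have hDcup : volume (D (A ∪ B)) = volume (D A ∪ D B) := by
    refine le_antisymm ?_ (measure_mono ?_)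
    · have hsub : D (A ∪ B) ⊆ (D A ∪ D B) ∪ E := by
        rintro x ⟨h1, h2⟩
        have hx : x ∈ Icc (0 : ℝ) (1 / 4) :=
          D_subset (union_subset hA1 hB1) ⟨h1, h2⟩
        simp only [mem_union] at h1 h2
        simp only [mem_union, D, mem_setOf_eq, hEdef, mem_inter_iff, mem_diff,
          hTAdef, mem_preimage]
        by_cases ha : x ∈ A <;> by_cases ha' : x + 3 / 4 ∈ A <;> tauto
      calc volume (D (A ∪ B)) ≤ volume ((D A ∪ D B) ∪ E) := measure_mono hsub
        _ ≤ volume (D A ∪ D B) + volume E := measure_union_le _ _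
        _ = volume (D A ∪ D B) := by rw [hE0, add_zero]
    · rintro x (⟨h1, h2⟩ | ⟨h1, h2⟩) <;>
        exact ⟨by simp [mem_union, h1], by simp [mem_union, h2]⟩
  have hDkey : volume (D (A ∪ B)) + volume (D (A ∩ B)) = volume (D A) + volume (D B) := by
    rw [hDcup, hDcap, measure_union_add_inter (D A) (measurable_D hB)]
  -- ν-level inclusion–exclusion
  have hνkey : volume (A ∪ B) + volume (A ∩ B) = volume A + volume B :=
    measure_union_add_inter A hB
  -- finiteness
  have fAB : volume (A ∪ B) ≠ ⊤ := vol_ne_top (union_subset hA1 hB1)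
  have fAiB : volume (A ∩ B) ≠ ⊤ := vol_ne_top ((inter_subset_left).trans hA1)
  have fA : volume A ≠ ⊤ := vol_ne_top hA1
  have fB : volume B ≠ ⊤ := vol_ne_top hB1
  have sub14 : Icc (0:ℝ) (1/4) ⊆ Icc 0 1 := Icc_subset_Icc le_rfl (by norm_num)
  have fDAB : volume (D (A ∪ B)) ≠ ⊤ :=
    vol_ne_top (fun x hx => sub14 (D_subset (union_subset hA1 hB1) hx))
  have fDAiB : volume (D (A ∩ B)) ≠ ⊤ :=
    vol_ne_top (fun x hx => sub14 (D_subset ((inter_subset_left).trans hA1) hx))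
  have fDA : volume (D A) ≠ ⊤ := vol_ne_top (fun x hx => sub14 (D_subset hA1 hx))
  have fDB : volume (D B) ≠ ⊤ := vol_ne_top (fun x hx => sub14 (D_subset hB1 hx))
  have rν : (volume (A ∪ B)).toReal + (volume (A ∩ B)).toReal
      = (volume A).toReal + (volume B).toReal := by
    have := congrArg ENNReal.toReal hνkey
    rwa [ENNReal.toReal_add fAB fAiB, ENNReal.toReal_add fA fB] at this
  have rD : (volume (D (A ∪ B))).toReal + (volume (D (A ∩ B))).toReal
      = (volume (D A)).toReal + (volume (D B)).toReal := by
    have := congrArg ENNReal.toReal hDkey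
    rwa [ENNReal.toReal_add fDAB fDAiB, ENNReal.toReal_add fDA fDB] at this
  rw [mu_eq, mu_eq, mu_eq, mu_eq]
  linarith
end

section
/- Let (X, 𝒜, μ) be a q-measure space and let A, B ∈ 𝒜 be arbitrary. Then ∫ (χ_A + χ_B) dμ = ∫ χ_A dμ + ∫ χ_B dμ if and only if A μ B, i.e. if and only if μ(A ∪ B) = μ(A) + μ(B) − μ(A ∩ B). -/
open MeasureTheory Set Filter Topology

/-- The `q`-integral:
`∫ f dμ = ∫₀^∞ μ(f⁻¹(λ,∞)) dλ − ∫₀^∞ μ(f⁻¹(−∞,−λ)) dλ`,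
the integrals on the right being Lebesgue integrals in `λ`. -/
noncomputable def qIntegral {X : Type*} [MeasurableSpace X]
    (μ : Set X → ℝ) (f : X → ℝ) : ℝ :=
  (∫ l in Set.Ioi (0 : ℝ), μ (f ⁻¹' Set.Ioi l))
    - ∫ l in Set.Ioi (0 : ℝ), μ (f ⁻¹' Set.Iio (-l))

/-- `f` is `μ`-integrable: `f` is measurable and both Lebesgue integrals defining
the `q`-integral are finite. -/
def QIntegrable {X : Type*} [MeasurableSpace X] (μ : Set X → ℝ) (f : X → ℝ) : Prop :=
  Measurable f ∧
  IntegrableOn (fun l => μ (f ⁻¹' Set.Ioi l)) (Set.Ioi (0 : ℝ)) ∧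
  IntegrableOn (fun l => μ (f ⁻¹' Set.Iio (-l))) (Set.Ioi (0 : ℝ))

/-! For nonnegative `f` the negative part of the `q`-integral vanishes, and the positive part is
the layer-cake integral of `λ ↦ μ(f > λ)`. For `χ_A + χ_B` the superlevel set is `A ∪ B` on
`(0, 1)`, `A ∩ B` on `[1, 2)` and empty beyond, so `∫ (χ_A + χ_B) dμ = μ(A ∪ B) + μ(A ∩ B)`,
while `∫ χ_S dμ = μ(S)`. The theorem is then a rearrangement of this identity. -/

lemma Grade2Additive.map_empty {X : Type*} [MeasurableSpace X] {μ : Set X → ℝ}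
    (hμ : Grade2Additive μ) : μ ∅ = 0 := by
  have h := hμ ∅ ∅ ∅ .empty .empty .empty
    disjoint_bot_left disjoint_bot_left disjoint_bot_left
  simp only [union_empty] at h
  linarith

lemma setIntegral_Ioi_zero_eq_add_of_steps {g : ℝ → ℝ} {c₁ c₂ : ℝ}
    (h₁ : ∀ l ∈ Ioo 0 1, g l = c₁) (h₂ : ∀ l ∈ Ico 1 2, g l = c₂) (h₃ : ∀ l, 2 ≤ l → g l = 0) :
    ∫ l in Ioi 0, g l = c₁ + c₂ := by
  have hg : EqOn g ((Ioo 0 1).indicator (fun _ => c₁) + (Ico 1 2).indicator (fun _ => c₂))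
      (Ioi 0) := by
    intro l hl
    rcases lt_or_ge l 1 with hl1 | hl1
    · simp [h₁ l ⟨hl, hl1⟩, indicator_of_mem (show l ∈ Ioo 0 1 from ⟨hl, hl1⟩), hl1.not_ge]
    rcases lt_or_ge l 2 with hl2 | hl2
    · simp [h₂ l ⟨hl1, hl2⟩, hl1, hl2, hl1.not_gt]
    · simp [h₃ l hl2, hl2.not_gt, hl1.not_gt]
  have hIoo : Ioo (0 : ℝ) 1 ∩ Ioi 0 = Ioo 0 1 := inter_eq_left.2 Ioo_subset_Ioi_self
  have hIco : Ico (1 : ℝ) 2 ∩ Ioi 0 = Ico 1 2 := inter_eq_left.2 fun _ hl => one_pos.trans_le hl.1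
  rw [setIntegral_congr_fun measurableSet_Ioi hg, integral_add',
    integral_indicator_const _ measurableSet_Ioo, integral_indicator_const _ measurableSet_Ico]
  · norm_num [Measure.real, hIoo, hIco]
  · exact (integrable_indicator_iff measurableSet_Ioo).2 (integrableOn_const (by simp [hIoo]))
  · exact (integrable_indicator_iff measurableSet_Ico).2 (integrableOn_const (by simp [hIco]))

section SuperlevelSets

variable {X : Type*} {l : ℝ}

lemma preimage_indicator_one_Ioi_of_lt_one (S : Set X) (h0 : 0 ≤ l) (h1 : l < 1) :
    (S.indicator fun _ => (1 : ℝ)) ⁻¹' Ioi l = S := by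
  ext x
  by_cases hx : x ∈ S <;> simp [hx, h0, h1]

lemma preimage_indicator_one_Ioi_of_one_le (S : Set X) (h1 : 1 ≤ l) :
    (S.indicator fun _ => (1 : ℝ)) ⁻¹' Ioi l = ∅ := by
  ext x
  by_cases hx : x ∈ S <;> simp [hx, h1, (zero_lt_one.trans_le h1).le]

variable (A B : Set X)

lemma preimage_indicator_add_indicator_Ioi_of_lt_one (h0 : 0 ≤ l) (h1 : l < 1) :
    (fun x => A.indicator (fun _ => (1 : ℝ)) x + B.indicator (fun _ => (1 : ℝ)) x) ⁻¹' Ioi l =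
      A ∪ B := by
  ext x
  by_cases ha : x ∈ A <;> by_cases hb : x ∈ B <;> simp [ha, hb] <;> linarith

lemma preimage_indicator_add_indicator_Ioi_of_lt_two (h1 : 1 ≤ l) (h2 : l < 2) :
    (fun x => A.indicator (fun _ => (1 : ℝ)) x + B.indicator (fun _ => (1 : ℝ)) x) ⁻¹' Ioi l =
      A ∩ B := by
  ext x
  by_cases ha : x ∈ A <;> by_cases hb : x ∈ B <;> simp [ha, hb] <;> linarith

lemma preimage_indicator_add_indicator_Ioi_of_two_le (h2 : 2 ≤ l) :
    (fun x => A.indicator (fun _ => (1 : ℝ)) x + B.indicator (fun _ => (1 : ℝ)) x) ⁻¹' Ioi l =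
      ∅ := by
  ext x
  by_cases ha : x ∈ A <;> by_cases hb : x ∈ B <;> simp [ha, hb] <;> linarith

end SuperlevelSets

section QIntegral

variable {X : Type*} [MeasurableSpace X] {μ : Set X → ℝ}

lemma qIntegral_of_nonneg (h0 : μ ∅ = 0) {f : X → ℝ} (hf : 0 ≤ f) :
    qIntegral μ f = ∫ l in Ioi 0, μ (f ⁻¹' Ioi l) := by
  have hneg : EqOn (fun l => μ (f ⁻¹' Iio (-l))) 0 (Ioi 0) := fun l hl => by
    have : f ⁻¹' Iio (-l) = ∅ :=
      eq_empty_of_forall_notMem fun x hx => (neg_neg_of_pos hl).not_ge ((hf x).trans hx.le)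
    simp [this, h0]
  rw [qIntegral, setIntegral_congr_fun measurableSet_Ioi hneg]
  simp

lemma qIntegral_indicator_one (h0 : μ ∅ = 0) (S : Set X) :
    qIntegral μ (S.indicator fun _ => 1) = μ S := by
  rw [qIntegral_of_nonneg h0 (indicator_nonneg fun _ _ => zero_le_one), ← add_zero (μ S)]
  refine setIntegral_Ioi_zero_eq_add_of_steps (fun l hl => ?_) (fun l hl => ?_) (fun l hl => ?_)
  · rw [preimage_indicator_one_Ioi_of_lt_one S hl.1.le hl.2]
  · rw [preimage_indicator_one_Ioi_of_one_le S hl.1, h0]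
  · rw [preimage_indicator_one_Ioi_of_one_le S (one_le_two.trans hl), h0]

lemma qIntegral_indicator_add_indicator (h0 : μ ∅ = 0) (A B : Set X) :
    qIntegral μ (fun x => A.indicator (fun _ => (1 : ℝ)) x + B.indicator (fun _ => (1 : ℝ)) x) =
      μ (A ∪ B) + μ (A ∩ B) := by
  have hnonneg (S : Set X) : 0 ≤ S.indicator fun _ => (1 : ℝ) :=
    indicator_nonneg fun _ _ => zero_le_one
  rw [qIntegral_of_nonneg h0 fun x => add_nonneg (hnonneg A x) (hnonneg B x)]
  refine setIntegral_Ioi_zero_eq_add_of_steps (fun l hl => ?_) (fun l hl => ?_) (fun l hl => ?_)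
  · rw [preimage_indicator_add_indicator_Ioi_of_lt_one A B hl.1.le hl.2]
  · rw [preimage_indicator_add_indicator_Ioi_of_lt_two A B hl.1 hl.2]
  · rw [preimage_indicator_add_indicator_Ioi_of_two_le A B hl, h0]

end QIntegral

theorem qIntegral_indicator_add_iff_general {X : Type*} [MeasurableSpace X]
    (μ : Set X → ℝ) (hμ : IsQMeasure μ)
    (A B : Set X) :
    qIntegral μ (fun x => Set.indicator A (fun _ => (1 : ℝ)) x
        + Set.indicator B (fun _ => (1 : ℝ)) x) =
      qIntegral μ (Set.indicator A fun _ => (1 : ℝ))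
        + qIntegral μ (Set.indicator B fun _ => (1 : ℝ)) ↔
    μ (A ∪ B) = μ A + μ B - μ (A ∩ B) := by
  have h0 := hμ.grade2.map_empty
  rw [qIntegral_indicator_add_indicator h0, qIntegral_indicator_one h0,
    qIntegral_indicator_one h0]
  constructor <;> intro h <;> linarith

/-- Lemma 4.3: for arbitrary measurable `A, B`,
`∫ (χ_A + χ_B) dμ = ∫ χ_A dμ + ∫ χ_B dμ` iff `A` and `B` are `μ`-compatible,
i.e. `μ(A ∪ B) = μ(A) + μ(B) − μ(A ∩ B)`. -/
theorem qIntegral_indicator_add_iff {X : Type*} [MeasurableSpace X]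
    (μ : Set X → ℝ) (hμ : IsQMeasure μ)
    (A B : Set X) (hA : MeasurableSet A) (hB : MeasurableSet B) :
    qIntegral μ (fun x => Set.indicator A (fun _ => (1 : ℝ)) x
        + Set.indicator B (fun _ => (1 : ℝ)) x) =
      qIntegral μ (Set.indicator A fun _ => (1 : ℝ))
        + qIntegral μ (Set.indicator B fun _ => (1 : ℝ)) ↔
    μ (A ∪ B) = μ A + μ B - μ (A ∩ B) :=
  qIntegral_indicator_add_iff_general μ hμ A B
end

section
/- Let (X, 𝒜, μ) be a q-measure space. If fᵢ ≥ 0 is an increasing sequence of measurable functions on X converging pointwise to f, and there exists a μ-integrable function g such that g μ-dominates fᵢ for all i (i.e. μ(fᵢ⁻¹(λ,∞)) ≤ μ(g⁻¹(λ,∞)) for all λ ∈ ℝ), then lim_{i→∞} ∫ fᵢ dμ = ∫ f dμ. -/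
open MeasureTheory Set Filter Topology

/-- For a measurable `f`, the level function `l ↦ μ (f ⁻¹' Ioi l)` is measurable,
given upward continuity of `μ`. -/
lemma measurable_qlevel {X : Type*} [MeasurableSpace X] (μ : Set X → ℝ)
    (hcont : ∀ A : ℕ → Set X, (∀ i, MeasurableSet (A i)) → Monotone A →
      Tendsto (fun i => μ (A i)) atTop (𝓝 (μ (⋃ i, A i))))
    {f : X → ℝ} (hf : Measurable f) :
    Measurable fun l => μ (f ⁻¹' Set.Ioi l) := by
  set a : ℕ → ℝ → ℝ := fun n l => (⌈l * 2 ^ n⌉ : ℝ) / 2 ^ n with ha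
  have hpow : ∀ n : ℕ, (0:ℝ) < 2 ^ n := fun n => by positivity
  have hage : ∀ n l, l ≤ a n l := by
    intro n l
    rw [ha, le_div_iff₀ (hpow n)]
    exact Int.le_ceil _
  have halt : ∀ n l, a n l < l + ((2:ℝ) ^ n)⁻¹ := by
    intro n l
    rw [ha, div_lt_iff₀ (hpow n)]
    calc ((⌈l * 2 ^ n⌉ : ℝ)) < l * 2 ^ n + 1 := Int.ceil_lt_add_one _
      _ ≤ (l + ((2:ℝ) ^ n)⁻¹) * 2 ^ n := by
          rw [add_mul, inv_mul_cancel₀ (hpow n).ne']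
  have hanti : ∀ l, Antitone fun n => a n l := by
    intro l
    refine antitone_nat_of_succ_le fun n => ?_
    rw [ha]
    simp only
    rw [div_le_div_iff₀ (hpow (n+1)) (hpow n)]
    have h1 : (⌈l * 2 ^ (n+1)⌉ : ℤ) ≤ 2 * ⌈l * 2 ^ n⌉ := by
      refine Int.ceil_le.mpr ?_
      push_cast
      rw [pow_succ]
      nlinarith [Int.le_ceil (l * 2 ^ n)]
    have h2 : ((⌈l * 2 ^ (n+1)⌉ : ℝ)) ≤ 2 * (⌈l * 2 ^ n⌉ : ℝ) := by exact_mod_cast h1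
    calc ((⌈l * 2 ^ (n+1)⌉ : ℝ)) * 2 ^ n ≤ (2 * (⌈l * 2 ^ n⌉ : ℝ)) * 2 ^ n :=
          mul_le_mul_of_nonneg_right h2 (hpow n).le
      _ = (⌈l * 2 ^ n⌉ : ℝ) * 2 ^ (n+1) := by ring
  have hmeas_n : ∀ n : ℕ, Measurable fun l => μ (f ⁻¹' Set.Ioi (a n l)) := by
    intro n
    have : (fun l => μ (f ⁻¹' Set.Ioi (a n l))) =
        (fun k : ℤ => μ (f ⁻¹' Set.Ioi ((k : ℝ) / 2 ^ n))) ∘ fun l => ⌈l * 2 ^ n⌉ := rfl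
    rw [this]
    exact measurable_from_top.comp (Int.measurable_ceil.comp (measurable_id.mul_const _))
  have hlim : ∀ l : ℝ, Tendsto (fun n => μ (f ⁻¹' Set.Ioi (a n l))) atTop
      (𝓝 (μ (f ⁻¹' Set.Ioi l))) := by
    intro l
    have hU : (⋃ n, f ⁻¹' Set.Ioi (a n l)) = f ⁻¹' Set.Ioi l := by
      ext x
      simp only [Set.mem_iUnion, Set.mem_preimage, Set.mem_Ioi]
      constructor
      · rintro ⟨n, hn⟩; exact lt_of_le_of_lt (hage n l) hn
      · intro hx
        have h2 : Tendsto (fun n : ℕ => ((2:ℝ) ^ n)⁻¹) atTop (𝓝 0) := by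
          simpa using tendsto_pow_atTop_nhds_zero_of_lt_one
            (by norm_num : (0:ℝ) ≤ (2:ℝ)⁻¹) (by norm_num : (2:ℝ)⁻¹ < 1) |>.comp tendsto_id
        have : ∀ᶠ n : ℕ in atTop, ((2:ℝ) ^ n)⁻¹ < f x - l :=
          (h2.eventually (eventually_lt_nhds (by linarith)))
        obtain ⟨n, hn⟩ := this.exists
        exact ⟨n, lt_of_lt_of_le (halt n l) (by linarith)⟩
    have := hcont (fun n => f ⁻¹' Set.Ioi (a n l))
      (fun n => hf measurableSet_Ioi)
      (fun m n hmn => Set.preimage_mono (Set.Ioi_subset_Ioi (hanti l hmn)))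
    rw [hU] at this
    exact this
  exact measurable_of_tendsto_metrizable hmeas_n (tendsto_pi_nhds.mpr hlim)


/-- Theorem 5.2 (`q`-dominated monotone convergence): if `fᵢ ≥ 0` is an increasing
sequence of measurable functions converging pointwise to `f`, and there is a
`μ`-integrable `g` that `μ`-dominates every `fᵢ`
(`μ(fᵢ⁻¹(λ,∞)) ≤ μ(g⁻¹(λ,∞))` for all `λ`), then `lim ∫ fᵢ dμ = ∫ f dμ`. -/
theorem qIntegral_monotone_convergence {X : Type*} [MeasurableSpace X]
    (μ : Set X → ℝ) (hμ : IsQMeasure μ)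
    (f : ℕ → X → ℝ) (hpos : ∀ i x, 0 ≤ f i x)
    (hmeas : ∀ i, Measurable (f i))
    (hmono : ∀ x, Monotone fun i => f i x)
    (F : X → ℝ)
    (hlim : ∀ x, Tendsto (fun i => f i x) atTop (𝓝 (F x)))
    (g : X → ℝ) (hg : QIntegrable μ g)
    (hdom : ∀ i (l : ℝ), μ (f i ⁻¹' Set.Ioi l) ≤ μ (g ⁻¹' Set.Ioi l)) :
    Tendsto (fun i => qIntegral μ (f i)) atTop (𝓝 (qIntegral μ F)) := by
  obtain ⟨hgmeas, hgint, -⟩ := hg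
  have h0 : μ ∅ = 0 := by
    have h := hμ.grade2 ∅ ∅ ∅ MeasurableSet.empty MeasurableSet.empty MeasurableSet.empty
      disjoint_bot_left disjoint_bot_left disjoint_bot_left
    simp only [Set.union_empty, Set.empty_union] at h
    linarith
  have hle : ∀ i x, f i x ≤ F x := fun i x => (hmono x).ge_of_tendsto (hlim x) i
  have hFpos : ∀ x, 0 ≤ F x := fun x => (hpos 0 x).trans (hle 0 x)
  have hneg : ∀ (h : X → ℝ), (∀ x, 0 ≤ h x) →
      (∫ l in Set.Ioi (0:ℝ), μ (h ⁻¹' Set.Iio (-l))) = 0 := by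
    intro h hh
    have heq : Set.EqOn (fun l => μ (h ⁻¹' Set.Iio (-l))) (fun _ => (0:ℝ)) (Set.Ioi 0) := by
      intro l hl
      have hlpos : (0:ℝ) < l := hl
      have hE : h ⁻¹' Set.Iio (-l) = ∅ := by
        ext x
        simp only [Set.mem_preimage, Set.mem_Iio, Set.mem_empty_iff_false, iff_false, not_lt]
        linarith [hh x]
      simp only [hE, h0]
    rw [setIntegral_congr_fun measurableSet_Ioi heq]
    simp
  have key : Tendsto (fun i => ∫ l in Set.Ioi (0:ℝ), μ (f i ⁻¹' Set.Ioi l)) atTop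
      (𝓝 (∫ l in Set.Ioi (0:ℝ), μ (F ⁻¹' Set.Ioi l))) := by
    refine tendsto_integral_of_dominated_convergence (fun l => μ (g ⁻¹' Set.Ioi l))
      (fun i => (measurable_qlevel μ hμ.cont.1 (hmeas i)).aestronglyMeasurable)
      hgint ?_ ?_
    · intro i
      refine Filter.Eventually.of_forall fun l => ?_
      rw [Real.norm_of_nonneg (hμ.nonneg _ ((hmeas i) measurableSet_Ioi))]
      exact hdom i l
    · refine Filter.Eventually.of_forall fun l => ?_
      have hU : (⋃ i, f i ⁻¹' Set.Ioi l) = F ⁻¹' Set.Ioi l := by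
        ext x
        simp only [Set.mem_iUnion, Set.mem_preimage, Set.mem_Ioi]
        constructor
        · rintro ⟨i, hi⟩; exact lt_of_lt_of_le hi (hle i x)
        · intro hx
          exact ((hlim x).eventually (eventually_gt_nhds hx)).exists
      have h := hμ.cont.1 (fun i => f i ⁻¹' Set.Ioi l)
        (fun i => (hmeas i) measurableSet_Ioi)
        (fun a b hab x hx => lt_of_lt_of_le hx (hmono x hab))
      rw [hU] at h
      exact h
  have e1 : ∀ i, qIntegral μ (f i) = ∫ l in Set.Ioi (0:ℝ), μ (f i ⁻¹' Set.Ioi l) := by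
    intro i; rw [qIntegral, hneg (f i) (hpos i), sub_zero]
  have e2 : qIntegral μ F = ∫ l in Set.Ioi (0:ℝ), μ (F ⁻¹' Set.Ioi l) := by
    rw [qIntegral, hneg F hFpos, sub_zero]
  simpa only [e1, e2] using key
end

section
/- Let X = [0,1] and let μ be q-Lebesgue measure on the Borel σ-algebra of X, i.e. μ(A) = ν(A)² where ν is Lebesgue measure. Then for every n = 0, 1, 2, … and every y ∈ [0,1], the q-integral of f(x) = xⁿ over [0,y] satisfies ∫_{[0,y]} xⁿ dμ(x) = (2 / ((n+1)(n+2))) · y^{n+2}. -/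
open MeasureTheory Set

/-- `q`-Lebesgue measure on (Borel subsets of) `[0,1]`: `μ(A) = ν(A)²`, where `ν`
is Lebesgue measure. -/
noncomputable def qLebesgue (A : Set ℝ) : ℝ := ((volume A).toReal) ^ 2

/-- Theorem 6.1: for `q`-Lebesgue measure `μ` on `[0,1]`, every `n = 0, 1, 2, …`
and every `y ∈ [0,1]`,
`∫_{[0,y]} xⁿ dμ(x) = (2 / ((n+1)(n+2))) y^{n+2}`. -/
theorem qLebesgue_integral_pow (n : ℕ) (y : ℝ) (hy : y ∈ Set.Icc (0 : ℝ) 1) :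
    qIntegral qLebesgue ((Set.Icc (0 : ℝ) y).indicator fun x => x ^ n) =
      2 / (((n : ℝ) + 1) * ((n : ℝ) + 2)) * y ^ (n + 2) := by
  obtain ⟨hy0, hy1⟩ := hy
  set f : ℝ → ℝ := (Icc (0:ℝ) y).indicator fun x => x ^ n with hf
  have hf_nonneg : ∀ x, 0 ≤ f x :=
    fun x => indicator_nonneg (fun x hx => pow_nonneg hx.1 n) x
  have h2 : (∫ l in Ioi (0:ℝ), qLebesgue (f ⁻¹' Iio (-l))) = 0 := by
    rw [setIntegral_congr_fun measurableSet_Ioi (g := fun _ => (0:ℝ))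
      (fun l hl => by
        have : f ⁻¹' Iio (-l) = ∅ := by
          ext x
          simp only [mem_preimage, mem_Iio, mem_empty_iff_false, iff_false, not_lt]
          have : (0:ℝ) < l := hl
          linarith [hf_nonneg x]
        simp [this, qLebesgue]), integral_zero]
  rw [qIntegral, h2, sub_zero]
  rcases Nat.eq_zero_or_pos n with hn | hn
  · -- n = 0
    subst hn
    have hpre : ∀ l ∈ Ioi (0:ℝ),
        qLebesgue (f ⁻¹' Ioi l) = (Ioo (0:ℝ) 1).indicator (fun _ => y ^ 2) l := by
      intro l hl
      have hl0 : (0:ℝ) < l := hl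
      by_cases h1 : l < 1
      · have : f ⁻¹' Ioi l = Icc 0 y := by
          ext x
          simp only [mem_preimage, mem_Ioi, hf]
          constructor
          · intro hx
            by_contra hxn
            simp [indicator_of_notMem hxn] at hx; linarith
          · intro hx; simp [indicator_of_mem hx]; linarith
        rw [this, indicator_of_mem (show l ∈ Ioo (0:ℝ) 1 from ⟨hl0, h1⟩)]
        simp [qLebesgue, Real.volume_Icc, ENNReal.toReal_ofReal hy0]
      · have : f ⁻¹' Ioi l = ∅ := by
          ext x
          simp only [mem_preimage, mem_Ioi, mem_empty_iff_false, iff_false, not_lt, hf]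
          by_cases hx : x ∈ Icc (0:ℝ) y
          · simp [indicator_of_mem hx]; linarith
          · simp [indicator_of_notMem hx]; linarith
        rw [this, indicator_of_notMem (by simp [not_lt.mpr (not_lt.mp h1)] : l ∉ Ioo (0:ℝ) 1)]
        simp [qLebesgue]
    rw [setIntegral_congr_fun measurableSet_Ioi hpre, setIntegral_indicator measurableSet_Ioo,
      inter_eq_right.mpr (Ioo_subset_Ioi_self), setIntegral_const]
    norm_num [Real.volume_Ioo]
  · -- n ≥ 1
    have hn0 : n ≠ 0 := hn.ne'
    have hnr : (0:ℝ) < n := by exact_mod_cast hn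
    rcases eq_or_lt_of_le hy0 with hy0' | hyp
    · -- y = 0
      have hy' : y = 0 := hy0'.symm
      subst hy'
      have hfx : ∀ x, f x = 0 := by
        intro x
        rw [hf]
        by_cases hx : x ∈ Icc (0:ℝ) 0
        · rw [indicator_of_mem hx]
          have hx0 : x = 0 := le_antisymm hx.2 hx.1
          rw [hx0, zero_pow hn0]
        · rw [indicator_of_notMem hx]
      have hpre : ∀ l ∈ Ioi (0:ℝ), qLebesgue (f ⁻¹' Ioi l) = 0 := by
        intro l hl
        have hl0 : (0:ℝ) < l := hl
        have : f ⁻¹' Ioi l = ∅ := by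
          ext x
          simp only [mem_preimage, mem_Ioi, mem_empty_iff_false, iff_false, not_lt, hfx x]
          exact hl0.le
        simp [this, qLebesgue]
      rw [setIntegral_congr_fun measurableSet_Ioi hpre, integral_zero]
      simp [zero_pow (by omega : n + 2 ≠ 0)]
    · -- y > 0
      set p : ℝ := (n:ℝ)⁻¹ with hp
      have hp0 : 0 < p := by positivity
      set c : ℝ := y ^ n with hc
      have hcpos : 0 < c := pow_pos hyp n
      have hcp : c ^ p = y := Real.pow_rpow_inv_natCast hy0 hn0
      have hpre : ∀ l ∈ Ioi (0:ℝ), f ⁻¹' Ioi l = Ioc (l ^ p) y := by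
        intro l hl
        have hl0 : (0:ℝ) < l := hl
        have hlp0 : 0 < l ^ p := Real.rpow_pos_of_pos hl0 p
        ext x
        simp only [mem_preimage, mem_Ioi, mem_Ioc, hf]
        constructor
        · intro hx
          by_cases hmem : x ∈ Icc (0:ℝ) y
          · rw [indicator_of_mem hmem] at hx
            refine ⟨?_, hmem.2⟩
            have : (l ^ p) ^ n < x ^ n := by
              rwa [Real.rpow_inv_natCast_pow hl0.le hn0]
            exact lt_of_pow_lt_pow_left₀ n hmem.1 this
          · rw [indicator_of_notMem hmem] at hx; linarith
        · rintro ⟨hx1, hx2⟩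
          have hx0 : 0 ≤ x := le_of_lt (lt_of_le_of_lt hlp0.le hx1)
          rw [indicator_of_mem (show x ∈ Icc (0:ℝ) y from ⟨hx0, hx2⟩)]
          calc l = (l ^ p) ^ n := (Real.rpow_inv_natCast_pow hl0.le hn0).symm
            _ < x ^ n := pow_lt_pow_left₀ hx1 hlp0.le hn0
      have hval : ∀ l ∈ Ioi (0:ℝ),
          qLebesgue (f ⁻¹' Ioi l) = (Ioc (0:ℝ) c).indicator (fun l => (y - l ^ p) ^ 2) l := by
        intro l hl
        have hl0 : (0:ℝ) < l := hl
        rw [hpre l hl]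
        by_cases hlc : l ≤ c
        · have hle : l ^ p ≤ y := by
            rw [← hcp]
            exact Real.rpow_le_rpow hl0.le hlc hp0.le
          rw [indicator_of_mem (show l ∈ Ioc (0:ℝ) c from ⟨hl0, hlc⟩)]
          simp [qLebesgue, Real.volume_Ioc, ENNReal.toReal_ofReal (by linarith : (0:ℝ) ≤ y - l ^ p)]
        · have hgt : y < l ^ p := by
            rw [← hcp]
            exact Real.rpow_lt_rpow hcpos.le (not_le.mp hlc) hp0
          rw [indicator_of_notMem (by simp [hlc] : l ∉ Ioc (0:ℝ) c),
            Ioc_eq_empty (not_lt.mpr hgt.le)]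
          simp [qLebesgue]
      rw [setIntegral_congr_fun measurableSet_Ioi hval, setIntegral_indicator measurableSet_Ioc,
        inter_eq_right.mpr (Ioc_subset_Ioi_self), ← intervalIntegral.integral_of_le hcpos.le]
      have expand : EqOn (fun l : ℝ => (y - l ^ p) ^ 2)
          (fun l : ℝ => y ^ 2 - 2 * y * l ^ p + l ^ (2 * p)) (uIcc 0 c) := by
        intro l hl
        have hl0 : 0 ≤ l := by
          rcases mem_uIcc.mp hl with h | h
          · exact h.1
          · linarith [h.1, hcpos]
        have : l ^ (2 * p) = (l ^ p) ^ 2 := by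
          rw [mul_comm, Real.rpow_mul hl0]
          norm_num
        simp only [this]
        ring
      rw [intervalIntegral.integral_congr expand]
      have hpm : (-1:ℝ) < p := by linarith
      have hpm2 : (-1:ℝ) < 2 * p := by linarith
      have i1 : IntervalIntegrable (fun l : ℝ => 2 * y * l ^ p) volume 0 c :=
        (intervalIntegral.intervalIntegrable_rpow' hpm).const_mul _
      have i2 : IntervalIntegrable (fun l : ℝ => l ^ (2 * p)) volume 0 c :=
        intervalIntegral.intervalIntegrable_rpow' hpm2
      have i0 : IntervalIntegrable (fun _ : ℝ => y ^ 2) volume 0 c :=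
        intervalIntegrable_const
      rw [intervalIntegral.integral_add (i0.sub i1) i2, intervalIntegral.integral_sub i0 i1,
        intervalIntegral.integral_const, intervalIntegral.integral_const_mul,
        integral_rpow (Or.inl hpm), integral_rpow (Or.inl hpm2)]
      have z1 : (0:ℝ) ^ (p + 1) = 0 := Real.zero_rpow (by linarith)
      have z2 : (0:ℝ) ^ (2 * p + 1) = 0 := Real.zero_rpow (by linarith)
      have e1 : c ^ (p + 1) = y * c := by
        rw [Real.rpow_add hcpos, Real.rpow_one, hcp]
      have e2 : c ^ (2 * p + 1) = y ^ 2 * c := by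
        rw [Real.rpow_add hcpos, Real.rpow_one, mul_comm (2:ℝ) p, Real.rpow_mul hcpos.le, hcp]
        norm_num
      rw [z1, z2, e1, e2]
      have hy2 : y ^ (n + 2) = c * y ^ 2 := by rw [hc, pow_add]
      rw [hy2, hp]
      have h1 : ((n:ℝ) + 1) ≠ 0 := by positivity
      have h2' : ((n:ℝ) + 2) ≠ 0 := by positivity
      have h3 : (n:ℝ)⁻¹ + 1 ≠ 0 := by positivity
      have h4 : 2 * (n:ℝ)⁻¹ + 1 ≠ 0 := by positivity
      field_simp
      ring
end
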